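/- Let B be a real n×m matrix, let p > 1 with Hölder conjugate p*, and for r > 1 let φ_r act componentwise on vectors by φ_r(t) = |t|^{r−2}·t. Then {λ^{1/p} : λ > 0 and there exists x ∈ ℝⁿ ∖ {0} with B·φ_p(Bᵀ x) = λ·φ_p(x)} = {μ^{1/p*} : μ > 0 and there exists y ∈ ℝᵐ ∖ {0} with Bᵀ·φ_{p*}(B y) = μ·φ_{p*}(y)}. (Taking B to be an incidence matrix of a graph or oriented hypergraph, this is a one-to-one correspondence between the positive eigenvalues of the vertex p-Laplacian and those of the edge p*-Laplacian.) -/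
import Mathlib


/-- `φ_r(t) = |t|^{r−2}·t`. -/
noncomputable def phiPow (r t : ℝ) : ℝ := |t| ^ (r - 2) * t

lemma phiPow_zero (r : ℝ) : phiPow r 0 = 0 := by simp [phiPow]

lemma phiPow_eq_zero {r t : ℝ} (h : phiPow r t = 0) : t = 0 := by
  by_contra ht
  have h1 : (0:ℝ) < |t| := abs_pos.mpr ht
  have h2 : (0:ℝ) < |t| ^ (r - 2) := Real.rpow_pos_of_pos h1 _
  exact ht (by simpa [phiPow, h2.ne'] using h)

lemma phiPow_inv {p q : ℝ} (hpq : (p - 1) * (q - 1) = 1) (t : ℝ) :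
    phiPow q (phiPow p t) = t := by
  rcases eq_or_ne t 0 with rfl | ht
  · simp [phiPow]
  · have hx : (0:ℝ) < |t| := abs_pos.mpr ht
    have h1 : |(|t| ^ (p - 2) * t)| = |t| ^ (p - 1) := by
      rw [abs_mul, abs_of_nonneg (Real.rpow_nonneg (abs_nonneg t) _)]
      rw [show p - 1 = (p - 2) + 1 by ring, Real.rpow_add hx, Real.rpow_one]
    simp only [phiPow]
    rw [h1, ← Real.rpow_mul (abs_nonneg t), ← mul_assoc, ← Real.rpow_add hx]
    have he : (p - 1) * (q - 2) + (p - 2) = 0 := by linear_combination hpq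
    rw [he, Real.rpow_zero, one_mul]

lemma phiPow_smul {c : ℝ} (hc : 0 < c) (r t : ℝ) :
    phiPow r (c * t) = c ^ (r - 1) * phiPow r t := by
  simp only [phiPow, abs_mul, abs_of_pos hc]
  rw [Real.mul_rpow hc.le (abs_nonneg t),
    show r - 1 = (r - 2) + 1 by ring, Real.rpow_add hc, Real.rpow_one]
  ring

lemma key {n m : ℕ} (B : Matrix (Fin n) (Fin m) ℝ)
    (p q : ℝ) (hp : 1 < p) (hq : 1 < q) (hpq : 1 / p + 1 / q = 1) (s : ℝ)
    (h : ∃ lam : ℝ, 0 < lam ∧ s = lam ^ (1 / p) ∧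
        ∃ x : Fin n → ℝ, x ≠ 0 ∧
          B.mulVec (fun j => phiPow p (B.transpose.mulVec x j))
            = lam • fun i => phiPow p (x i)) :
    ∃ mu : ℝ, 0 < mu ∧ s = mu ^ (1 / q) ∧
        ∃ y : Fin m → ℝ, y ≠ 0 ∧
          B.transpose.mulVec (fun i => phiPow q (B.mulVec y i))
            = mu • fun j => phiPow q (y j) := by
  obtain ⟨lam, hlam, hs, x, hx, heq⟩ := h
  have hp0 : p ≠ 0 := by positivity
  have hq0 : q ≠ 0 := by positivity
  have hconj : (p - 1) * (q - 1) = 1 := by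
    field_simp at hpq
    nlinarith [hpq]
  set y : Fin m → ℝ := fun j => phiPow p (B.transpose.mulVec x j) with hy
  refine ⟨lam ^ (q - 1), Real.rpow_pos_of_pos hlam _, ?_, y, ?_, ?_⟩
  · rw [hs, ← Real.rpow_mul hlam.le]
    congr 1
    field_simp
    linarith
  · intro hy0
    apply hx
    have hBy : B.mulVec y = 0 := by rw [hy0, Matrix.mulVec_zero]
    rw [heq] at hBy
    funext i
    have := congrFun hBy i
    simp only [Pi.smul_apply, smul_eq_mul, Pi.zero_apply] at this
    have h2 : phiPow p (x i) = 0 := by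
      rcases mul_eq_zero.mp this with h | h
      · exact absurd h hlam.ne'
      · exact h
    exact phiPow_eq_zero h2
  · have hBy : ∀ i, B.mulVec y i = lam * phiPow p (x i) := by
      intro i
      have := congrFun heq i
      simpa using this
    have hmid : (fun i => phiPow q (B.mulVec y i)) = (lam ^ (q - 1)) • x := by
      funext i
      rw [hBy i, phiPow_smul hlam q, phiPow_inv hconj]
      simp
    rw [hmid, Matrix.mulVec_smul]
    congr 1
    funext j
    rw [hy]
    simp only
    rw [phiPow_inv hconj]

/-- one-to-one correspondence between the positive eigenvalues of the
vertex `p`-Laplacian `x ↦ B φ_p(Bᵀ x)` and those of the edge `p*`-Laplacian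
`y ↦ Bᵀ φ_{p*}(B y)`, via `λ ↦ λ^{1/p}` and `μ ↦ μ^{1/p*}`. -/
theorem stmt_8 {n m : ℕ} (B : Matrix (Fin n) (Fin m) ℝ)
    (p pstar : ℝ) (hp : 1 < p) (hpq : 1 / p + 1 / pstar = 1) :
    {s : ℝ | ∃ lam : ℝ, 0 < lam ∧ s = lam ^ (1 / p) ∧
        ∃ x : Fin n → ℝ, x ≠ 0 ∧
          B.mulVec (fun j => phiPow p (B.transpose.mulVec x j))
            = lam • fun i => phiPow p (x i)} =
    {s : ℝ | ∃ mu : ℝ, 0 < mu ∧ s = mu ^ (1 / pstar) ∧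
        ∃ y : Fin m → ℝ, y ≠ 0 ∧
          B.transpose.mulVec (fun i => phiPow pstar (B.mulVec y i))
            = mu • fun j => phiPow pstar (y j)} := by
  have hp1 : 0 < 1 / p := by positivity
  have hplt : 1 / p < 1 := by
    rw [div_lt_one (by linarith)]; linarith
  have hq1 : 0 < 1 / pstar := by linarith
  have hqpos : 0 < pstar := one_div_pos.mp hq1
  have hq : 1 < pstar := by
    rw [← div_lt_one hqpos]; linarith
  ext s
  simp only [Set.mem_setOf_eq]
  constructor
  · exact fun h => key B p pstar hp hq hpq s h
  · intro h
    have := key B.transpose pstar p hq hp (by linarith) s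
    rw [Matrix.transpose_transpose] at this
    exact this h
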